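/- arXiv:2511.03966 — 2 statements merged into one kernel-verified Lean document; each statement's English description precedes it below -/
import Mathlib

section
/- Assume p ≥ 2 and σ > 0. The total mean squared error β ↦ ∑_{i=1}^{p} E[(I_adj(i, β) − μ_i)²] attains its unique global minimum over ℝ at the optimal smoothing factor β* = (p−1)σ² / (S + (p−1)σ²), and the minimal value equals p·σ² − (p−1)²σ⁴ / (S + (p−1)σ²), which is strictly less than p·σ². -/
/-!
Writing `x̄` for the mean of a vector `x`, the error of the smoothed estimator splits as
`I_adj(i, β) - μ_i = β (μ̄ - μ_i) + (1 - β) ε_i + β ε̄`. Summing the squares over `i`, the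
cross terms vanish, in mean or because `∑ (μ̄ - μ_i) = 0`, and `E[(∑ ε_k)²] = p σ²` by
independence, so the total mean squared error is the quadratic
`(S + (p - 1) σ²) β² - 2 (p - 1) σ² β + p σ²`. Its leading coefficient is positive, so completing
the square gives the minimiser and the minimum.
-/

open MeasureTheory ProbabilityTheory Finset

lemma integral_sq_sum_of_pairwise_indepFun {Ω ι : Type*} [MeasurableSpace Ω] {P : Measure Ω}
    [IsFiniteMeasure P]
    {s : Finset ι} {X : ι → Ω → ℝ} (hL2 : ∀ i ∈ s, MemLp (X i) 2 P)
    (hindep : (s : Set ι).Pairwise fun i j => X i ⟂ᵢ[P] X j)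
    (hmean : ∀ i ∈ s, ∫ ω, X i ω ∂P = 0) :
    ∫ ω, (∑ i ∈ s, X i ω) ^ 2 ∂P = ∑ i ∈ s, ∫ ω, X i ω ^ 2 ∂P := by
  have hsum_mean : ∫ ω, (∑ i ∈ s, X i) ω ∂P = 0 := by
    simp only [Finset.sum_apply]
    rw [integral_finsetSum s fun i hi => (hL2 i hi).integrable one_le_two]
    exact sum_eq_zero hmean
  calc ∫ ω, (∑ i ∈ s, X i ω) ^ 2 ∂P = variance (∑ i ∈ s, X i) P := by
        rw [variance_of_integral_eq_zero (memLp_finsetSum' s hL2).aemeasurable hsum_mean]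
        simp only [Finset.sum_apply]
    _ = ∑ i ∈ s, variance (X i) P := IndepFun.variance_sum hL2 hindep
    _ = ∑ i ∈ s, ∫ ω, X i ω ^ 2 ∂P := sum_congr rfl fun i hi =>
        variance_of_integral_eq_zero (hL2 i hi).aemeasurable (hmean i hi)

lemma sum_sq_shrinkage_error {p : ℕ} (hp : (p : ℝ) ≠ 0) (μ e : Fin p → ℝ) (β : ℝ) :
    ∑ i, ((1 - β) * (μ i + e i) + β * ((1 / p) * ∑ k, (μ k + e k)) - μ i) ^ 2
      = β ^ 2 * ∑ i, ((1 / p) * ∑ k, μ k - μ i) ^ 2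
        + 2 * β * (1 - β) * ∑ i, ((1 / p) * ∑ k, μ k - μ i) * e i
        + (1 - β) ^ 2 * ∑ i, e i ^ 2 + (2 * β - β ^ 2) / p * (∑ i, e i) ^ 2 := by
  set μbar := (1 / (p : ℝ)) * ∑ k, μ k
  set ebar := (1 / (p : ℝ)) * ∑ k, e k
  have hdev : ∑ i, (μbar - μ i) = 0 := by
    simp only [sum_sub_distrib, sum_const, card_univ, Fintype.card_fin, nsmul_eq_mul, μbar]
    field_simp; ring
  have he : ∑ i, e i = p * ebar := by simp only [ebar]; field_simp
  have hexpand : ∀ i, ((1 - β) * (μ i + e i) + β * ((1 / p) * ∑ k, (μ k + e k)) - μ i) ^ 2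
      = β ^ 2 * (μbar - μ i) ^ 2 + 2 * β * (1 - β) * ((μbar - μ i) * e i) + (1 - β) ^ 2 * e i ^ 2
        + 2 * β ^ 2 * ebar * (μbar - μ i) + 2 * β * (1 - β) * ebar * e i + β ^ 2 * ebar ^ 2 := by
    intro i; simp only [sum_add_distrib, μbar, ebar]; ring
  rw [sum_congr rfl fun i _ => hexpand i]
  simp only [sum_add_distrib, ← mul_sum, sum_const, card_univ, Fintype.card_fin, nsmul_eq_mul, hdev,
    he]
  field_simp
  ring

lemma sum_integral_sq_shrinkage_error {Ω : Type*} [MeasurableSpace Ω] {P : Measure Ω}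
    [IsProbabilityMeasure P] {p : ℕ} (hp : (p : ℝ) ≠ 0) {ε : Fin p → Ω → ℝ} {σ : ℝ}
    (hL2 : ∀ i, MemLp (ε i) 2 P) (hindep : Pairwise fun i j => ε i ⟂ᵢ[P] ε j)
    (hmean : ∀ i, ∫ ω, ε i ω ∂P = 0) (hvar : ∀ i, ∫ ω, ε i ω ^ 2 ∂P = σ ^ 2)
    (μ : Fin p → ℝ) (β : ℝ) :
    ∑ i, ∫ ω, ((1 - β) * (μ i + ε i ω) + β * ((1 / p) * ∑ k, (μ k + ε k ω)) - μ i) ^ 2 ∂P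
      = β ^ 2 * ∑ i, ((1 / p) * ∑ k, μ k - μ i) ^ 2
        + ((1 - β) ^ 2 * p + (2 * β - β ^ 2)) * σ ^ 2 := by
  have hshift : ∀ k, MemLp (fun ω => μ k + ε k ω) 2 P := fun k => (memLp_const (μ k)).add (hL2 k)
  have hshift_sum : MemLp (fun ω => ∑ k, (μ k + ε k ω)) 2 P :=
    memLp_finsetSum univ fun k _ => hshift k
  have herror : ∀ i, MemLp
      (fun ω => (1 - β) * (μ i + ε i ω) + β * ((1 / p) * ∑ k, (μ k + ε k ω)) - μ i) 2 P :=
    fun i => (((hshift i).const_mul _).add ((hshift_sum.const_mul _).const_mul _)).sub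
      (memLp_const _)
  have hint : ∀ i, Integrable (ε i) P := fun i => (hL2 i).integrable one_le_two
  have hsum_sq : Integrable (fun ω => (∑ i, ε i ω) ^ 2) P :=
    (memLp_finsetSum univ fun i _ => hL2 i).integrable_sq
  have hlin : ∀ d : Fin p → ℝ, Integrable (fun ω => ∑ i, d i * ε i ω) P :=
    fun d => integrable_finsetSum univ fun i _ => (hint i).const_mul _
  have hsq : Integrable (fun ω => ∑ i, ε i ω ^ 2) P :=
    integrable_finsetSum univ fun i _ => (hL2 i).integrable_sq
  have hlin_zero : ∀ d : Fin p → ℝ, ∫ ω, ∑ i, d i * ε i ω ∂P = 0 := fun d => by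
    simp [integral_finsetSum univ fun i _ => (hint i).const_mul (d i), integral_const_mul, hmean]
  have hsq_val : ∫ ω, ∑ i, ε i ω ^ 2 ∂P = p * σ ^ 2 := by
    simp [integral_finsetSum univ fun i _ => (hL2 i).integrable_sq, hvar]
  have hsum_sq_val : ∫ ω, (∑ i, ε i ω) ^ 2 ∂P = p * σ ^ 2 := by
    rw [integral_sq_sum_of_pairwise_indepFun (fun i _ => hL2 i)
      (fun i _ j _ hij => hindep hij) (fun i _ => hmean i)]
    simp [hvar]
  rw [← integral_finsetSum univ fun i _ => (herror i).integrable_sq]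
  simp_rw [sum_sq_shrinkage_error hp μ _ β]
  rw [integral_add, integral_add, integral_add, integral_const, integral_const_mul,
    integral_const_mul, integral_const_mul, hlin_zero, hsq_val, hsum_sq_val]
  · rw [probReal_univ, one_smul]
    field_simp
    ring
  all_goals fun_prop

lemma quadratic_eq_vertex_form {a : ℝ} (ha : a ≠ 0) (b c x : ℝ) :
    a * x ^ 2 - 2 * b * x + c = a * (x - b / a) ^ 2 + (c - b ^ 2 / a) := by
  field_simp
  ring

lemma quadratic_at_vertex {a : ℝ} (ha : a ≠ 0) (b c : ℝ) :
    a * (b / a) ^ 2 - 2 * b * (b / a) + c = c - b ^ 2 / a := by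
  rw [quadratic_eq_vertex_form ha, sub_self]
  ring

lemma quadratic_at_vertex_lt {a : ℝ} (ha : 0 < a) (b c : ℝ) {x : ℝ} (hx : x ≠ b / a) :
    c - b ^ 2 / a < a * x ^ 2 - 2 * b * x + c := by
  rw [quadratic_eq_vertex_form ha.ne']
  have : x - b / a ≠ 0 := sub_ne_zero.mpr hx
  have : 0 < a * (x - b / a) ^ 2 := by positivity
  linarith

/-- Assume `p ≥ 2` and `σ > 0`. The total mean squared error
`β ↦ ∑_i E[(I_adj(i, β) − μ_i)²]` attains its unique global minimum over `ℝ` at the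
optimal smoothing factor `β* = (p−1)σ² / (S + (p−1)σ²)`, and the minimal value equals
`p·σ² − (p−1)²σ⁴ / (S + (p−1)σ²)`, which is strictly less than `p·σ²`. -/
theorem adjusted_total_mse_min
    {Ω : Type*} [MeasurableSpace Ω] (P : Measure Ω) [IsProbabilityMeasure P]
    (p : ℕ) (hp : 2 ≤ p)
    (μs : Fin p → ℝ) (μbar : ℝ) (hμbar : μbar = (1 / (p : ℝ)) * ∑ k, μs k)
    (ε : Fin p → Ω → ℝ) (σ : ℝ) (hσ : 0 < σ)
    (hindep : iIndepFun ε P)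
    (hL2 : ∀ i, MemLp (ε i) 2 P)
    (hmean : ∀ i, ∫ ω, ε i ω ∂P = 0)
    (hvar : ∀ i, ∫ ω, (ε i ω) ^ 2 ∂P = σ ^ 2)
    (Iparam : Fin p → Ω → ℝ) (hIparam : ∀ i ω, Iparam i ω = μs i + ε i ω)
    (Ilayer : Ω → ℝ) (hIlayer : ∀ ω, Ilayer ω = (1 / (p : ℝ)) * ∑ k, Iparam k ω)
    (Iadj : Fin p → ℝ → Ω → ℝ)
    (hIadj : ∀ i β ω, Iadj i β ω = (1 - β) * Iparam i ω + β * Ilayer ω)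
    (S : ℝ) (hS : S = ∑ i, (μbar - μs i) ^ 2)
    (βstar : ℝ) (hβstar : βstar = ((p : ℝ) - 1) * σ ^ 2 / (S + ((p : ℝ) - 1) * σ ^ 2)) :
    (∀ β : ℝ, β ≠ βstar →
        ∑ i, ∫ ω, (Iadj i βstar ω - μs i) ^ 2 ∂P
          < ∑ i, ∫ ω, (Iadj i β ω - μs i) ^ 2 ∂P) ∧
      (∑ i, ∫ ω, (Iadj i βstar ω - μs i) ^ 2 ∂P
        = (p : ℝ) * σ ^ 2 - ((p : ℝ) - 1) ^ 2 * σ ^ 4 / (S + ((p : ℝ) - 1) * σ ^ 2)) ∧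
      (∑ i, ∫ ω, (Iadj i βstar ω - μs i) ^ 2 ∂P < (p : ℝ) * σ ^ 2) := by
  have hp1 : (1 : ℝ) < p := by exact_mod_cast hp
  have hB : 0 < ((p : ℝ) - 1) * σ ^ 2 := by have := sub_pos.mpr hp1; positivity
  have hA : 0 < S + ((p : ℝ) - 1) * σ ^ 2 := by
    have : 0 ≤ S := hS ▸ sum_nonneg fun i _ => sq_nonneg _
    linarith
  have hMSE : ∀ β, ∑ i, ∫ ω, (Iadj i β ω - μs i) ^ 2 ∂P
      = (S + ((p : ℝ) - 1) * σ ^ 2) * β ^ 2 - 2 * (((p : ℝ) - 1) * σ ^ 2) * β + p * σ ^ 2 := by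
    intro β
    simp only [hIadj, hIlayer, hIparam]
    rw [sum_integral_sq_shrinkage_error (by positivity) hL2 (fun i j hij => hindep.indepFun hij)
      hmean hvar, ← hμbar, ← hS]
    ring
  have hmin := quadratic_at_vertex hA.ne' (((p : ℝ) - 1) * σ ^ 2) (p * σ ^ 2)
  refine ⟨fun β hβ => ?_, ?_, ?_⟩
  · rw [hMSE, hMSE, hβstar, hmin]
    exact quadratic_at_vertex_lt hA _ _ (hβstar ▸ hβ)
  · rw [hMSE, hβstar, hmin]
    ring
  · rw [hMSE, hβstar, hmin]
    exact sub_lt_self _ (div_pos (pow_pos hB 2) hA)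
end

section
/- (Superiority of HIF's importance estimation, Corollary 1.) Assume p ≥ 2 and σ > 0. Then there exists a smoothing factor β with 0 < β < 1 such that the total mean squared error of the hierarchically smoothed importance estimator is strictly lower than that of the naive individual-parameter estimator: ∑_{i=1}^{p} E[(I_adj(i, β) − μ_i)²] < ∑_{i=1}^{p} E[(I_param(i) − μ_i)²]. -/
/-! `I_adj(i, β) − μ_i = β (μ̄ − μ_i) + ∑_k w_k ε_k` with `w_k = (1 − β) δ_{ik} + β / p`. The errors
are orthogonal in `L²` with common variance `σ²`, so the total mean squared error is
`p σ² − 2β (p − 1) σ² + β² ((p − 1) σ² + ∑_i (μ̄ − μ_i)²)`: a quadratic in `β` whose linear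
coefficient is negative once `p ≥ 2`, hence below the naive `p σ²` for small `β > 0`. -/

open MeasureTheory ProbabilityTheory Finset

lemma exists_pos_lt_one_sq_mul_lt_two_mul {A T : ℝ} (hA : 0 < A) (hT : 0 ≤ T) :
    ∃ β : ℝ, 0 < β ∧ β < 1 ∧ β ^ 2 * T < 2 * β * A := by
  have hden : 0 < 2 * A + T := by linarith
  set β := A / (2 * A + T) with hβ
  have hβ0 : 0 < β := by positivity
  have hβT : β * T = A - 2 * β * A := by rw [hβ]; field_simp; ring
  refine ⟨β, hβ0, (div_lt_one hden).2 (by linarith), ?_⟩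
  nlinarith [mul_pos hβ0 hA, mul_pos (mul_pos hβ0 hβ0) hA]

section Orthogonal

variable {Ω ι : Type*} [MeasurableSpace Ω] {P : Measure Ω} {ε : ι → Ω → ℝ}

lemma integral_mul_eq_zero_of_iIndepFun (hindep : iIndepFun ε P)
    (hmeas : ∀ i, AEStronglyMeasurable (ε i) P) (hmean : ∀ i, ∫ ω, ε i ω ∂P = 0)
    {i j : ι} (hij : i ≠ j) : ∫ ω, ε i ω * ε j ω ∂P = 0 := by
  rw [(hindep.indepFun hij).integral_fun_mul_eq_mul_integral (hmeas i) (hmeas j), hmean i,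
    zero_mul]

variable [Fintype ι] {σ : ℝ}

lemma integral_sum_mul_sq_of_orthogonal (hL2 : ∀ i, MemLp (ε i) 2 P)
    (horth : Pairwise fun i j => ∫ ω, ε i ω * ε j ω ∂P = 0)
    (hvar : ∀ i, ∫ ω, ε i ω ^ 2 ∂P = σ ^ 2) (w : ι → ℝ) :
    ∫ ω, (∑ i, w i * ε i ω) ^ 2 ∂P = σ ^ 2 * ∑ i, w i ^ 2 := by
  classical
  have hcov : ∀ i j, ∫ ω, ε i ω * ε j ω ∂P = if i = j then σ ^ 2 else 0 := by
    intro i j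
    split_ifs with hij
    · simp only [hij, ← sq, hvar]
    · exact horth hij
  have hint : ∀ i j, Integrable (fun ω => ε i ω * ε j ω) P :=
    fun i j => (hL2 i).integrable_mul (hL2 j)
  have hexp : ∀ ω, (∑ i, w i * ε i ω) ^ 2 = ∑ i, ∑ j, w i * w j * (ε i ω * ε j ω) := by
    intro ω
    rw [sq, sum_mul_sum]
    exact sum_congr rfl fun i _ => sum_congr rfl fun j _ => by ring
  simp_rw [hexp]
  rw [integral_finsetSum _ fun i _ => integrable_finsetSum _ fun j _ => (hint i j).const_mul _]
  simp_rw [integral_finsetSum _ fun j _ => (hint _ j).const_mul _, integral_const_mul, hcov]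
  simp [mul_sum, mul_comm, sq]

lemma integral_sq_const_add_sum_mul [IsProbabilityMeasure P] (hL2 : ∀ i, MemLp (ε i) 2 P)
    (horth : Pairwise fun i j => ∫ ω, ε i ω * ε j ω ∂P = 0)
    (hmean : ∀ i, ∫ ω, ε i ω ∂P = 0) (hvar : ∀ i, ∫ ω, ε i ω ^ 2 ∂P = σ ^ 2)
    (c : ℝ) (w : ι → ℝ) :
    ∫ ω, (c + ∑ i, w i * ε i ω) ^ 2 ∂P = c ^ 2 + σ ^ 2 * ∑ i, w i ^ 2 := by
  set S := fun ω => ∑ i, w i * ε i ω with hS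
  have hint : ∀ i, Integrable (fun ω => w i * ε i ω) P :=
    fun i => ((hL2 i).integrable one_le_two).const_mul _
  have hSL2 : MemLp S 2 P := memLp_finsetSum _ fun i _ => (hL2 i).const_mul (w i)
  have hSmean : ∫ ω, S ω ∂P = 0 := by
    simp [hS, integral_finsetSum _ fun i _ => hint i, integral_const_mul, hmean]
  have hlin : Integrable (fun ω => c ^ 2 + 2 * c * S ω) P :=
    (integrable_const _).add ((hSL2.integrable one_le_two).const_mul _)
  calc ∫ ω, (c + S ω) ^ 2 ∂P = ∫ ω, c ^ 2 + 2 * c * S ω + S ω ^ 2 ∂P := by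
        congr 1; ext ω; ring
    _ = c ^ 2 + σ ^ 2 * ∑ i, w i ^ 2 := by
        rw [integral_add hlin hSL2.integrable_sq,
          integral_add (integrable_const _) ((hSL2.integrable one_le_two).const_mul _),
          integral_const_mul, hSmean, hS, integral_sum_mul_sq_of_orthogonal hL2 horth hvar]
        simp

end Orthogonal

noncomputable def smoothingWeight (p : ℕ) (β : ℝ) (i k : Fin p) : ℝ :=
  (1 - β) * (if k = i then 1 else 0) + β / p

lemma sum_smoothingWeight_sq {p : ℕ} (hp : p ≠ 0) (β : ℝ) (i : Fin p) :
    ∑ k, smoothingWeight p β i k ^ 2 = (1 - β) ^ 2 + (2 * β - β ^ 2) / p := by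
  have hp' : (p : ℝ) ≠ 0 := Nat.cast_ne_zero.2 hp
  simp only [smoothingWeight, add_sq, mul_pow, sum_add_distrib, ← sum_mul, ← mul_sum]
  simp only [ite_pow, one_pow, ne_eq, OfNat.ofNat_ne_zero, not_false_eq_true, zero_pow,
    sum_ite_eq', mem_univ, ↓reduceIte, mul_one, sum_const, card_univ, Fintype.card_fin, nsmul_eq_mul]
  field_simp
  ring

lemma smoothed_sub_eq_bias_add_sum {p : ℕ} (μs : Fin p → ℝ) (ε : Fin p → ℝ) (β : ℝ) (i : Fin p) :
    (1 - β) * (μs i + ε i) + β * ((1 / (p : ℝ)) * ∑ k, (μs k + ε k)) - μs i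
      = β * ((1 / (p : ℝ)) * ∑ k, μs k - μs i) + ∑ k, smoothingWeight p β i k * ε k := by
  simp only [smoothingWeight, add_mul, sum_add_distrib, mul_assoc, ite_mul, one_mul, zero_mul,
    sum_ite_eq', mem_univ, if_true, ← mul_sum]
  ring

lemma integral_smoothed_sub_sq {Ω : Type*} [MeasurableSpace Ω] {P : Measure Ω}
    [IsProbabilityMeasure P] {p : ℕ} (hp : p ≠ 0) (μs : Fin p → ℝ) {ε : Fin p → Ω → ℝ} {σ : ℝ}
    (hL2 : ∀ i, MemLp (ε i) 2 P) (horth : Pairwise fun i j => ∫ ω, ε i ω * ε j ω ∂P = 0)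
    (hmean : ∀ i, ∫ ω, ε i ω ∂P = 0) (hvar : ∀ i, ∫ ω, ε i ω ^ 2 ∂P = σ ^ 2) (β : ℝ) (i : Fin p) :
    ∫ ω, ((1 - β) * (μs i + ε i ω) + β * ((1 / (p : ℝ)) * ∑ k, (μs k + ε k ω)) - μs i) ^ 2 ∂P
      = (β * ((1 / (p : ℝ)) * ∑ k, μs k - μs i)) ^ 2
        + σ ^ 2 * ((1 - β) ^ 2 + (2 * β - β ^ 2) / p) := by
  have hdecomp := fun ω => smoothed_sub_eq_bias_add_sum μs (fun k => ε k ω) β i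
  simp_rw [hdecomp]
  rw [integral_sq_const_add_sum_mul hL2 horth hmean hvar, sum_smoothingWeight_sq hp]

theorem hif_superiority_general
    {Ω : Type*} [MeasurableSpace Ω] (P : Measure Ω) [IsProbabilityMeasure P]
    (p : ℕ) (hp : 2 ≤ p)
    (μs : Fin p → ℝ)
    (ε : Fin p → Ω → ℝ) (σ : ℝ) (hσ : 0 < σ)
    (hindep : iIndepFun ε P)
    (hL2 : ∀ i, MemLp (ε i) 2 P)
    (hmean : ∀ i, ∫ ω, ε i ω ∂P = 0)
    (hvar : ∀ i, ∫ ω, (ε i ω) ^ 2 ∂P = σ ^ 2)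
    (Iparam : Fin p → Ω → ℝ) (hIparam : ∀ i ω, Iparam i ω = μs i + ε i ω)
    (Ilayer : Ω → ℝ) (hIlayer : ∀ ω, Ilayer ω = (1 / (p : ℝ)) * ∑ k, Iparam k ω)
    (Iadj : Fin p → ℝ → Ω → ℝ)
    (hIadj : ∀ i β ω, Iadj i β ω = (1 - β) * Iparam i ω + β * Ilayer ω) :
    ∃ β : ℝ, 0 < β ∧ β < 1 ∧
      ∑ i, ∫ ω, (Iadj i β ω - μs i) ^ 2 ∂P
        < ∑ i, ∫ ω, (Iparam i ω - μs i) ^ 2 ∂P := by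
  have hp1 : (1 : ℝ) < p := by exact_mod_cast hp
  have horth : Pairwise fun i j => ∫ ω, ε i ω * ε j ω ∂P = 0 := fun i j hij =>
    integral_mul_eq_zero_of_iIndepFun hindep (fun k => (hL2 k).1) hmean hij
  set B := ∑ i, ((1 / (p : ℝ)) * ∑ k, μs k - μs i) ^ 2 with hB
  obtain ⟨β, hβ0, hβ1, hβ⟩ := exists_pos_lt_one_sq_mul_lt_two_mul
    (A := (p - 1) * σ ^ 2) (T := (p - 1) * σ ^ 2 + B)
    (mul_pos (by linarith) (by positivity)) (by positivity)
  refine ⟨β, hβ0, hβ1, ?_⟩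
  simp only [hIadj, hIlayer, hIparam, add_sub_cancel_left]
  rw [sum_congr rfl fun i _ => integral_smoothed_sub_sq (by omega) μs hL2 horth hmean hvar β i]
  simp only [hvar, sum_add_distrib, sum_const, card_univ, Fintype.card_fin, nsmul_eq_mul, mul_pow,
    ← mul_sum, ← hB]
  have hp0 : (p : ℝ) ≠ 0 := by positivity
  calc _ = p * σ ^ 2 - (2 * β * ((p - 1) * σ ^ 2) - β ^ 2 * ((p - 1) * σ ^ 2 + B)) := by
          field_simp
          ring
    _ < p * σ ^ 2 := by linarith

/-- Superiority of HIF's importance estimation, Corollary 1: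
Assume `p ≥ 2` and `σ > 0`. Then there exists a smoothing factor `β` with `0 < β < 1`
such that the total mean squared error of the hierarchically smoothed importance
estimator is strictly lower than that of the naive individual-parameter estimator:
`∑_i E[(I_adj(i, β) − μ_i)²] < ∑_i E[(I_param(i) − μ_i)²]`. -/
theorem hif_superiority
    {Ω : Type*} [MeasurableSpace Ω] (P : Measure Ω) [IsProbabilityMeasure P]
    (p : ℕ) (hp : 2 ≤ p)
    (μs : Fin p → ℝ) (μbar : ℝ) (hμbar : μbar = (1 / (p : ℝ)) * ∑ k, μs k)
    (ε : Fin p → Ω → ℝ) (σ : ℝ) (hσ : 0 < σ)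
    (hindep : iIndepFun ε P)
    (hL2 : ∀ i, MemLp (ε i) 2 P)
    (hmean : ∀ i, ∫ ω, ε i ω ∂P = 0)
    (hvar : ∀ i, ∫ ω, (ε i ω) ^ 2 ∂P = σ ^ 2)
    (Iparam : Fin p → Ω → ℝ) (hIparam : ∀ i ω, Iparam i ω = μs i + ε i ω)
    (Ilayer : Ω → ℝ) (hIlayer : ∀ ω, Ilayer ω = (1 / (p : ℝ)) * ∑ k, Iparam k ω)
    (Iadj : Fin p → ℝ → Ω → ℝ)
    (hIadj : ∀ i β ω, Iadj i β ω = (1 - β) * Iparam i ω + β * Ilayer ω) :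
    ∃ β : ℝ, 0 < β ∧ β < 1 ∧
      ∑ i, ∫ ω, (Iadj i β ω - μs i) ^ 2 ∂P
        < ∑ i, ∫ ω, (Iparam i ω - μs i) ^ 2 ∂P :=
  hif_superiority_general P p hp μs ε σ hσ hindep hL2 hmean hvar Iparam hIparam Ilayer hIlayer Iadj
    hIadj
end
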